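/- Let Q ⊂ ℝⁿ (n ≥ 2) be a bounded convex body with a John ellipsoid E having orthonormal axis directions v₁, …, v_n and axis lengths M₁ ≥ M₂ ≥ ⋯ ≥ M_n. Then there exists a constant c_n > 0, depending only on n, such that for each 1 ≤ k ≤ n−1 and every k-dimensional linear subspace V ⊆ ℝⁿ, there is a unit vector w ∈ V and a real number t such that the hyperplane section Q ∩ {x : x·w = t} has (n−1)-dimensional Lebesgue measure at least c_n · ∏_{j=1, j≠k}^{n} M_j. -/

import Mathlib

open MeasureTheory
open scoped RealInnerProductSpace

/-- The first Dirichlet eigenvalue of a set `U ⊆ ℝ^d`, defined via the variational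
(Rayleigh quotient) formulation over smooth compactly supported test functions. -/
noncomputable def dirichletEigenvalue (d : ℕ) (U : Set (EuclideanSpace ℝ (Fin d))) : ℝ :=
  sInf { r : ℝ | ∃ v : EuclideanSpace ℝ (Fin d) → ℝ,
    ContDiff ℝ (⊤ : ℕ∞) v ∧ HasCompactSupport v ∧ tsupport v ⊆ U ∧ v ≠ 0 ∧
    r = (∫ x, ‖fderiv ℝ v x‖ ^ 2) / ∫ x, (v x) ^ 2 }

/-- The Laplacian of `u : ℝ^d → ℝ`. -/
noncomputable def lap (d : ℕ) (u : EuclideanSpace ℝ (Fin d) → ℝ)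
    (x : EuclideanSpace ℝ (Fin d)) : ℝ :=
  ∑ i : Fin d, fderiv ℝ (fun y => fderiv ℝ u y (EuclideanSpace.single i 1)) x
    (EuclideanSpace.single i 1)

/-- `u` is a first Dirichlet eigenfunction of `U`: continuous on `ℝ^d`, vanishing outside `U`
(the extension by zero of an `H¹₀(U)` function), smooth and positive in `U`, and satisfying
`Δu + λ(U) u = 0` in `U`. -/
def IsFirstEigenfunction (d : ℕ) (U : Set (EuclideanSpace ℝ (Fin d)))
    (u : EuclideanSpace ℝ (Fin d) → ℝ) : Prop :=
  Continuous u ∧ (∀ x, x ∉ U → u x = 0) ∧ ContDiffOn ℝ (⊤ : ℕ∞) u U ∧ (∀ x ∈ U, 0 < u x) ∧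
  ∀ x ∈ U, lap d u x + dirichletEigenvalue d U * u x = 0

/-- The ellipsoid with centre `c`, (orthonormal) axis directions `v i` and axis lengths `N i`
(so semi-axes `N i / 2`). -/
noncomputable def ellipsoid (d : ℕ) (c : EuclideanSpace ℝ (Fin d))
    (v : Fin d → EuclideanSpace ℝ (Fin d)) (N : Fin d → ℝ) : Set (EuclideanSpace ℝ (Fin d)) :=
  { x | ∑ i : Fin d, (⟪x - c, v i⟫ / (N i / 2)) ^ 2 ≤ 1 }

/-- `(c, v, N)` describes a John ellipsoid of `Q`: an ellipsoid contained in `Q` whose dilation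
about its centre by the factor `d` contains `Q`. -/
def IsJohnEllipsoid (d : ℕ) (Q : Set (EuclideanSpace ℝ (Fin d))) (c : EuclideanSpace ℝ (Fin d))
    (v : Fin d → EuclideanSpace ℝ (Fin d)) (N : Fin d → ℝ) : Prop :=
  Orthonormal ℝ v ∧ (∀ i, 0 < N i) ∧ ellipsoid d c v N ⊆ Q ∧
    Q ⊆ ellipsoid d c v (fun i => d * N i)

/-- The vector in `ℝ^d` whose first `i` coordinates are `Y` and last `d - i` coordinates are `X`. -/
noncomputable def splice (d i : ℕ) (Y : EuclideanSpace ℝ (Fin i))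
    (X : EuclideanSpace ℝ (Fin (d - i))) : EuclideanSpace ℝ (Fin d) :=
  WithLp.toLp 2 fun j => if h : (j : ℕ) < i then Y ⟨j, h⟩ else X ⟨(j : ℕ) - i, by have := j.isLt; omega⟩

/-- The `(d-i)`-dimensional cross-section `W(Y) = { X' : (Y, X') ∈ W }`. -/
def crossSection (d i : ℕ) (W : Set (EuclideanSpace ℝ (Fin d)))
    (Y : EuclideanSpace ℝ (Fin i)) : Set (EuclideanSpace ℝ (Fin (d - i))) :=
  { X | splice d i Y X ∈ W }

/-- `μ_i^*(W)`: the infimum of the first Dirichlet eigenvalues of the nonempty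
`(d-i)`-dimensional cross-sections of `W`. -/
noncomputable def muStar (d i : ℕ) (W : Set (EuclideanSpace ℝ (Fin d))) : ℝ :=
  sInf { r : ℝ | ∃ Y : EuclideanSpace ℝ (Fin i), (crossSection d i W Y).Nonempty ∧
    r = dirichletEigenvalue (d - i) (crossSection d i W Y) }

/-- The sup-norm of `u`. -/
noncomputable def supNorm (d : ℕ) (u : EuclideanSpace ℝ (Fin d) → ℝ) : ℝ :=
  sSup (Set.range fun x => |u x|)

def iotaMap (n : ℕ) (mv : ℕ) (j : Fin (n-1)) : Fin n :=
  ⟨if (j : ℕ) < mv then (j : ℕ) else (j : ℕ) + 1, by have := j.isLt; split <;> omega⟩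

def rhoMap (n : ℕ) (mv : ℕ) (hm : mv < n) (hn : 2 ≤ n) (i : Fin n) : Fin (n-1) :=
  ⟨if (i : ℕ) < mv then (i : ℕ) else (i : ℕ) - 1, by have := i.isLt; split <;> omega⟩

lemma iotaMap_ne (n mv : ℕ) (j : Fin (n-1)) : (iotaMap n mv j : ℕ) ≠ mv := by
  simp only [iotaMap]; split <;> omega

lemma iotaMap_inj (n mv : ℕ) : Function.Injective (iotaMap n mv) := by
  intro a b h
  have h' := congrArg Fin.val h
  simp only [iotaMap] at h'
  apply Fin.ext
  split_ifs at h' <;> omega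

lemma rho_iota (n mv : ℕ) (hm : mv < n) (hn : 2 ≤ n) (j : Fin (n-1)) :
    rhoMap n mv hm hn (iotaMap n mv j) = j := by
  apply Fin.ext; have := j.isLt
  simp only [iotaMap, rhoMap]
  split_ifs <;> omega

lemma iota_rho (n mv : ℕ) (hm : mv < n) (hn : 2 ≤ n) (i : Fin n) (hi : (i : ℕ) ≠ mv) :
    iotaMap n mv (rhoMap n mv hm hn i) = i := by
  apply Fin.ext; have := i.isLt
  simp only [iotaMap, rhoMap]
  split_ifs <;> omega


private lemma aux_exists_w (n : ℕ) (hn : 2 ≤ n) (k : ℕ) (hk1 : 1 ≤ k) (hkn : k ≤ n - 1)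
    (v : Fin n → EuclideanSpace ℝ (Fin n)) (hv : Orthonormal ℝ v)
    (V : Submodule ℝ (EuclideanSpace ℝ (Fin n))) (hVrank : Module.finrank ℝ V = k) :
    ∃ w : EuclideanSpace ℝ (Fin n), w ∈ V ∧ ‖w‖ = 1 ∧
      (∀ i : Fin n, (i : ℕ) < k - 1 → ⟪v i, w⟫ = 0) ∧ (∃ i : Fin n, ⟪v i, w⟫ ≠ 0) := by
  classical
  set U : Submodule ℝ (EuclideanSpace ℝ (Fin n)) :=
    Submodule.span ℝ (v '' {i : Fin n | (i : ℕ) < k - 1}) with hU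
  have hUrank : Module.finrank ℝ U ≤ k - 1 := by
    have himg : v '' {i : Fin n | (i : ℕ) < k - 1} =
        Set.range (fun s : {i : Fin n // (i : ℕ) < k - 1} => v s.1) := by
      exact (Set.image_eq_range _ _)
    have hli : LinearIndependent ℝ (fun s : {i : Fin n // (i : ℕ) < k - 1} => v s.1) :=
      (hv.comp _ Subtype.val_injective).linearIndependent
    have hcard : Fintype.card {i : Fin n // (i : ℕ) < k - 1} ≤ k - 1 := by
      have hinj : Function.Injective
          (fun s : {i : Fin n // (i : ℕ) < k - 1} => (⟨(s.1 : ℕ), s.2⟩ : Fin (k - 1))) := by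
        intro a b h
        have := congrArg Fin.val h
        simp only at this
        exact Subtype.ext (Fin.ext this)
      simpa using Fintype.card_le_of_injective _ hinj
    rw [hU, himg, finrank_span_eq_card hli]
    exact hcard
  have hWrank : n - (k - 1) ≤ Module.finrank ℝ Uᗮ := by
    have h := Submodule.finrank_add_finrank_orthogonal U
    rw [finrank_euclideanSpace_fin] at h
    omega
  have hinf : 0 < Module.finrank ℝ ↥(V ⊓ Uᗮ) := by
    have h1 := Submodule.finrank_sup_add_finrank_inf_eq V Uᗮ
    have h2 : Module.finrank ℝ ↥(V ⊔ Uᗮ) ≤ n := by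
      simpa [finrank_euclideanSpace_fin] using Submodule.finrank_le (V ⊔ Uᗮ)
    rw [hVrank] at h1
    omega
  obtain ⟨w', hw'ne⟩ := Module.finrank_pos_iff_exists_ne_zero.mp hinf
  have hww : (w' : EuclideanSpace ℝ (Fin n)) ≠ 0 := by
    simpa [Submodule.coe_eq_zero] using hw'ne
  refine ⟨(‖(w' : EuclideanSpace ℝ (Fin n))‖)⁻¹ • (w' : EuclideanSpace ℝ (Fin n)), ?_, ?_, ?_, ?_⟩
  · exact V.smul_mem _ (Submodule.mem_inf.mp w'.2).1
  · simpa using norm_smul_inv_norm (𝕜 := ℝ) hww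
  · intro i hi
    have h0 : ⟪v i, (w' : EuclideanSpace ℝ (Fin n))⟫ = 0 :=
      (Submodule.mem_orthogonal U _).mp (Submodule.mem_inf.mp w'.2).2 (v i)
        (Submodule.subset_span ⟨i, hi, rfl⟩)
    rw [real_inner_smul_right, h0, mul_zero]
  · by_contra h
    push_neg at h
    have hsp : Submodule.span ℝ (Set.range v) = ⊤ := by
      have : Nonempty (Fin n) := ⟨⟨0, by omega⟩⟩
      exact hv.linearIndependent.span_eq_top_of_card_eq_finrank
        (by simp [finrank_euclideanSpace_fin])
    set w : EuclideanSpace ℝ (Fin n) := (‖(w' : EuclideanSpace ℝ (Fin n))‖)⁻¹ • w' with hwdef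
    have key : ∀ u ∈ Submodule.span ℝ (Set.range v), ⟪u, w⟫ = 0 := by
      intro u hu
      induction hu using Submodule.span_induction with
      | mem x hx => obtain ⟨i, rfl⟩ := hx; exact h i
      | zero => exact inner_zero_left _
      | add x y _ _ hx hy => rw [inner_add_left, hx, hy, add_zero]
      | smul c x _ hx => rw [real_inner_smul_left, hx, mul_zero]
    have hw0 : ⟪w, w⟫ = 0 := key w (by rw [hsp]; trivial)
    have hwz : w = 0 := inner_self_eq_zero.mp hw0
    have : ‖w‖ = 1 := by simpa [hwdef] using norm_smul_inv_norm (𝕜 := ℝ) hww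
    rw [hwz] at this
    simp at this

private lemma aux_section_bound (n : ℕ) (hn : 2 ≤ n) (v : Fin n → EuclideanSpace ℝ (Fin n))
    (hv : Orthonormal ℝ v) (x₀ : EuclideanSpace ℝ (Fin n)) (M : Fin n → ℝ)
    (hMpos : ∀ i, 0 < M i) (w : EuclideanSpace ℝ (Fin n)) (hw1 : ‖w‖ = 1)
    (m : Fin n) (hγm : ⟪v m, w⟫ ≠ 0)
    (hmax : ∀ i, |⟪v i, w⟫| * M i ≤ |⟪v m, w⟫| * M m)
    (Q : Set (EuclideanSpace ℝ (Fin n))) (hEQ : ellipsoid n x₀ v M ⊆ Q) :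
    μH[(n : ℝ) - 1] (Q ∩ {x | ⟪x, w⟫ = ⟪x₀, w⟫}) ≥
      ENNReal.ofReal (((2 * n : ℝ))⁻¹ ^ (n - 1) * ∏ i ∈ Finset.univ.erase m, M i) := by
  classical
  have hv_ite := orthonormal_iff_ite.mp hv
  have hnR : (2 : ℝ) ≤ (n : ℝ) := by exact_mod_cast hn
  have hnR0 : (0 : ℝ) < (n : ℝ) := by linarith
  set ι' : Fin (n-1) → Fin n := iotaMap n (m : ℕ) with hι'
  have hι'm : ∀ j, ι' j ≠ m := by
    intro j hc
    exact iotaMap_ne n (m : ℕ) j (congrArg Fin.val hc)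
  set ψ : (Fin (n-1) → ℝ) → ℝ :=
    fun z => -(∑ j, ⟪v (ι' j), w⟫ * z j) / ⟪v m, w⟫ with hψdef
  set F : (Fin (n-1) → ℝ) → EuclideanSpace ℝ (Fin n) :=
    fun z => x₀ + ((∑ j, z j • v (ι' j)) + ψ z • v m) with hFdef
  set B : Set (Fin (n-1) → ℝ) :=
    Set.univ.pi fun j => Set.Icc (-(M (ι' j) / (4 * n))) (M (ι' j) / (4 * n)) with hBdef
  have hFsub : ∀ z, F z - x₀ = (∑ j, z j • v (ι' j)) + ψ z • v m := by
    intro z; rw [hFdef]; simp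
  have hinner_j : ∀ (z : Fin (n-1) → ℝ) (j : Fin (n-1)), ⟪F z - x₀, v (ι' j)⟫ = z j := by
    intro z j
    rw [hFsub, inner_add_left, sum_inner, real_inner_smul_left, hv_ite,
      if_neg (fun hc => hι'm j hc.symm), mul_zero, add_zero]
    rw [Finset.sum_eq_single j]
    · rw [real_inner_smul_left, hv_ite, if_pos rfl, mul_one]
    · intro b _ hb
      rw [real_inner_smul_left, hv_ite, if_neg (fun hc => hb (iotaMap_inj n (m : ℕ) hc)),
        mul_zero]
    · simp
  have hinner_m : ∀ (z : Fin (n-1) → ℝ), ⟪F z - x₀, v m⟫ = ψ z := by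
    intro z
    rw [hFsub, inner_add_left, sum_inner, real_inner_smul_left, hv_ite, if_pos rfl, mul_one]
    rw [Finset.sum_eq_zero, zero_add]
    intro j _
    rw [real_inner_smul_left, hv_ite, if_neg (hι'm j), mul_zero]
  have hzb : ∀ z ∈ B, ∀ j, |z j| ≤ M (ι' j) / (4 * n) := by
    intro z hz j
    have := hz j (Set.mem_univ j)
    exact abs_le.mpr ⟨this.1, this.2⟩
  have habs : 0 < |⟪v m, w⟫| := abs_pos.mpr hγm
  -- bound on ψ
  have hψB : ∀ z ∈ B, |ψ z| ≤ M m / 4 := by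
    intro z hz
    have hsum : |∑ j, ⟪v (ι' j), w⟫ * z j| ≤ (n : ℝ) * (|⟪v m, w⟫| * M m / (4 * n)) := by
      calc |∑ j, ⟪v (ι' j), w⟫ * z j| ≤ ∑ j, |⟪v (ι' j), w⟫ * z j| :=
            Finset.abs_sum_le_sum_abs _ _
        _ ≤ ∑ _j : Fin (n-1), |⟪v m, w⟫| * M m / (4 * n) := by
            apply Finset.sum_le_sum
            intro j _
            rw [abs_mul]
            calc |⟪v (ι' j), w⟫| * |z j| ≤ |⟪v (ι' j), w⟫| * (M (ι' j) / (4 * n)) :=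
                  mul_le_mul_of_nonneg_left (hzb z hz j) (abs_nonneg _)
              _ = |⟪v (ι' j), w⟫| * M (ι' j) / (4 * n) := by ring
              _ ≤ |⟪v m, w⟫| * M m / (4 * n) := by
                  exact div_le_div_of_nonneg_right (hmax _) (by positivity)
        _ = ((n - 1 : ℕ) : ℝ) * (|⟪v m, w⟫| * M m / (4 * n)) := by
            rw [Finset.sum_const, Finset.card_univ, Fintype.card_fin, nsmul_eq_mul]
        _ ≤ (n : ℝ) * (|⟪v m, w⟫| * M m / (4 * n)) := by
            apply mul_le_mul_of_nonneg_right
            · exact_mod_cast Nat.sub_le n 1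
            · have := (hMpos m).le; positivity
    rw [hψdef]
    rw [abs_div, abs_neg]
    rw [div_le_iff₀ habs]
    calc |∑ j, ⟪v (ι' j), w⟫ * z j| ≤ (n : ℝ) * (|⟪v m, w⟫| * M m / (4 * n)) := hsum
      _ = M m / 4 * |⟪v m, w⟫| := by field_simp
  -- F maps B into Q
  have hFQ : ∀ z ∈ B, F z ∈ Q := by
    intro z hz
    apply hEQ
    show ∑ i : Fin n, (⟪F z - x₀, v i⟫ / (M i / 2)) ^ 2 ≤ 1
    rw [← Finset.sum_erase_add _ _ (Finset.mem_univ m)]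
    have hm_term : (⟪F z - x₀, v m⟫ / (M m / 2)) ^ 2 ≤ (1/2 : ℝ) ^ 2 := by
      rw [hinner_m]
      have h1 : |ψ z / (M m / 2)| ≤ 1/2 := by
        rw [abs_div, abs_of_pos (show (0:ℝ) < M m / 2 by have := hMpos m; positivity)]
        rw [div_le_iff₀ (show (0:ℝ) < M m / 2 by have := hMpos m; positivity)]
        calc |ψ z| ≤ M m / 4 := hψB z hz
          _ = 1/2 * (M m / 2) := by ring
      calc (ψ z / (M m / 2)) ^ 2 = |ψ z / (M m / 2)| ^ 2 := (sq_abs _).symm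
        _ ≤ (1/2 : ℝ) ^ 2 := pow_le_pow_left₀ (abs_nonneg _) h1 2
    have hj_term : ∀ i ∈ Finset.univ.erase m,
        (⟪F z - x₀, v i⟫ / (M i / 2)) ^ 2 ≤ (1/(2 * n) : ℝ) ^ 2 := by
      intro i hi
      have hine : (i : ℕ) ≠ (m : ℕ) := fun hc => (Finset.mem_erase.mp hi).1 (Fin.ext hc)
      obtain ⟨j, rfl⟩ : ∃ j, ι' j = i := ⟨rhoMap n (m : ℕ) m.isLt hn i,
        iota_rho n (m : ℕ) m.isLt hn i hine⟩
      rw [hinner_j]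
      have hMj := hMpos (ι' j)
      have h1 : |z j / (M (ι' j) / 2)| ≤ 1/(2 * n) := by
        rw [abs_div, abs_of_pos (show (0:ℝ) < M (ι' j) / 2 by positivity)]
        rw [div_le_iff₀ (show (0:ℝ) < M (ι' j) / 2 by positivity)]
        calc |z j| ≤ M (ι' j) / (4 * n) := hzb z hz j
          _ = 1/(2 * n) * (M (ι' j) / 2) := by ring
      calc (z j / (M (ι' j) / 2)) ^ 2 = |z j / (M (ι' j) / 2)| ^ 2 := (sq_abs _).symm
        _ ≤ (1/(2 * n) : ℝ) ^ 2 := pow_le_pow_left₀ (abs_nonneg _) h1 2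
    have hsum_j : ∑ i ∈ Finset.univ.erase m, (⟪F z - x₀, v i⟫ / (M i / 2)) ^ 2 ≤
        ((n - 1 : ℕ) : ℝ) * (1/(2 * n) : ℝ) ^ 2 := by
      calc ∑ i ∈ Finset.univ.erase m, (⟪F z - x₀, v i⟫ / (M i / 2)) ^ 2
          ≤ ∑ _i ∈ Finset.univ.erase m, (1/(2 * n) : ℝ) ^ 2 := Finset.sum_le_sum hj_term
        _ = ((n - 1 : ℕ) : ℝ) * (1/(2 * n) : ℝ) ^ 2 := by
            rw [Finset.sum_const, Finset.card_erase_of_mem (Finset.mem_univ m),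
              Finset.card_univ, Fintype.card_fin, nsmul_eq_mul]
    have harith : ((n - 1 : ℕ) : ℝ) * (1/(2 * n) : ℝ) ^ 2 + (1/2 : ℝ) ^ 2 ≤ 1 := by
      have h1 : ((n - 1 : ℕ) : ℝ) ≤ (n : ℝ) := by exact_mod_cast Nat.sub_le n 1
      have h2 : ((n - 1 : ℕ) : ℝ) * (1/(2 * n) : ℝ) ^ 2 ≤ (n : ℝ) * (1/(2 * n) : ℝ) ^ 2 :=
        mul_le_mul_of_nonneg_right h1 (by positivity)
      have h3 : (n : ℝ) * (1/(2 * n) : ℝ) ^ 2 = 1 / (4 * n) := by field_simp; ring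
      have h4 : 1 / (4 * (n : ℝ)) ≤ 1 / 8 := by
        apply one_div_le_one_div_of_le (by norm_num) (by linarith)
      rw [h3] at h2
      linarith
    linarith [hsum_j, hm_term, harith]
  -- F maps into the hyperplane
  have hFhyp : ∀ z : Fin (n-1) → ℝ, ⟪F z, w⟫ = ⟪x₀, w⟫ := by
    intro z
    have h0 : ⟪F z - x₀, w⟫ = 0 := by
      rw [hFsub, inner_add_left, sum_inner]
      simp only [real_inner_smul_left]
      have hψm : ψ z * ⟪v m, w⟫ = -(∑ j, ⟪v (ι' j), w⟫ * z j) := by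
        simp only [hψdef]; exact div_mul_cancel₀ _ hγm
      rw [hψm]
      rw [Finset.sum_congr rfl (fun j _ => mul_comm (z j) (⟪v (ι' j), w⟫))]
      ring
    have h1 : ⟪F z - x₀, w⟫ = ⟪F z, w⟫ - ⟪x₀, w⟫ := inner_sub_left _ _ _
    linarith [h0, h1.symm]
  have hGsub : F '' B ⊆ Q ∩ {x | ⟪x, w⟫ = ⟪x₀, w⟫} := by
    rintro x ⟨z, hz, rfl⟩
    exact ⟨hFQ z hz, hFhyp z⟩
  -- the 1-Lipschitz projection
  set P : EuclideanSpace ℝ (Fin n) → (Fin (n-1) → ℝ) :=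
    fun x j => ⟪x - x₀, v (ι' j)⟫ with hPdef
  have hPlip : LipschitzWith 1 P := by
    apply LipschitzWith.of_dist_le_mul
    intro x y
    rw [NNReal.coe_one, one_mul]
    rw [dist_pi_le_iff dist_nonneg]
    intro j
    rw [Real.dist_eq]
    have he : P x j - P y j = ⟪x - y, v (ι' j)⟫ := by
      rw [hPdef]
      simp only
      rw [← inner_sub_left]
      congr 1
      abel
    rw [he]
    calc |⟪x - y, v (ι' j)⟫| ≤ ‖x - y‖ * ‖v (ι' j)‖ := abs_real_inner_le_norm _ _
      _ = ‖x - y‖ := by rw [hv.1 (ι' j), mul_one]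
      _ = dist x y := (dist_eq_norm x y).symm
  have hPF : ∀ z, P (F z) = z := by
    intro z; funext j
    exact hinner_j z j
  have hd0 : (0 : ℝ) ≤ (n : ℝ) - 1 := by linarith
  -- measure computations
  have h3 : P '' (F '' B) = B := by
    rw [Set.image_image]
    simp only [hPF, Set.image_id']
  have h2 : μH[(n : ℝ) - 1] (P '' (F '' B)) ≤ μH[(n : ℝ) - 1] (F '' B) := by
    have := hPlip.hausdorffMeasure_image_le hd0 (F '' B)
    simpa using this
  have h1 : μH[(n : ℝ) - 1] (F '' B) ≤ μH[(n : ℝ) - 1] (Q ∩ {x | ⟪x, w⟫ = ⟪x₀, w⟫}) :=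
    measure_mono hGsub
  have h4 : μH[(n : ℝ) - 1] (B : Set (Fin (n-1) → ℝ)) = volume B := by
    have hpi := hausdorffMeasure_pi_real (ι := Fin (n-1))
    have hcast : ((Fintype.card (Fin (n-1)) : ℕ) : ℝ) = (n : ℝ) - 1 := by
      rw [Fintype.card_fin, Nat.cast_sub (by omega), Nat.cast_one]
    rw [← hcast, hpi]
  have h5 : volume B = ENNReal.ofReal (∏ j : Fin (n-1), (M (ι' j) / (2 * n))) := by
    rw [hBdef, volume_pi_pi]
    rw [ENNReal.ofReal_prod_of_nonneg (fun j _ => by have := (hMpos (ι' j)).le; positivity)]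
    apply Finset.prod_congr rfl
    intro j _
    rw [Real.volume_Icc]
    congr 1
    ring
  have hreal : ((2 * n : ℝ))⁻¹ ^ (n - 1) * ∏ i ∈ Finset.univ.erase m, M i ≤
      ∏ j : Fin (n-1), (M (ι' j) / (2 * n)) := by
    have hprodm : ∏ j : Fin (n-1), M (ι' j) = ∏ i ∈ Finset.univ.erase m, M i := by
      apply Finset.prod_nbij' (fun j => ι' j) (fun i => rhoMap n (m : ℕ) m.isLt hn i)
      · intro j _
        exact Finset.mem_erase.mpr ⟨hι'm j, Finset.mem_univ _⟩
      · intro i _; exact Finset.mem_univ _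
      · intro j _; exact rho_iota n (m : ℕ) m.isLt hn j
      · intro i hi
        exact iota_rho n (m : ℕ) m.isLt hn i
          (fun hc => (Finset.mem_erase.mp hi).1 (Fin.ext hc))
      · intro j _; rfl
    have hre : ∏ j : Fin (n-1), (M (ι' j) / (2 * n)) =
        (∏ i ∈ Finset.univ.erase m, M i) * ((2 * n : ℝ))⁻¹ ^ (n - 1) := by
      rw [show (fun j : Fin (n-1) => M (ι' j) / (2 * (n : ℝ))) =
          (fun j => M (ι' j) * ((2 * n : ℝ))⁻¹) from funext fun j => div_eq_mul_inv _ _]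
      rw [Finset.prod_mul_distrib, Finset.prod_const, Finset.card_univ, Fintype.card_fin,
        hprodm]
    rw [hre, mul_comm]
  calc ENNReal.ofReal (((2 * n : ℝ))⁻¹ ^ (n - 1) * ∏ i ∈ Finset.univ.erase m, M i)
      ≤ ENNReal.ofReal (∏ j : Fin (n-1), (M (ι' j) / (2 * n))) :=
        ENNReal.ofReal_le_ofReal hreal
    _ = volume B := h5.symm
    _ = μH[(n : ℝ) - 1] (B : Set (Fin (n-1) → ℝ)) := h4.symm
    _ = μH[(n : ℝ) - 1] (P '' (F '' B)) := by rw [h3]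
    _ ≤ μH[(n : ℝ) - 1] (F '' B) := h2
    _ ≤ μH[(n : ℝ) - 1] (Q ∩ {x | ⟪x, w⟫ = ⟪x₀, w⟫}) := h1

/-- For a convex body `Q` with John ellipsoid axis lengths `M₁ ≥ ⋯ ≥ M_n`,
every `k`-dimensional subspace contains a unit direction `w` admitting a hyperplane section
of `Q` of `(n-1)`-dimensional measure at least `c_n ∏_{j ≠ k} M_j`. -/
theorem convex_body_large_section (n : ℕ) (hn : 2 ≤ n) :
    ∃ c : ℝ, 0 < c ∧
      ∀ (Q : Set (EuclideanSpace ℝ (Fin n))) (x₀ : EuclideanSpace ℝ (Fin n))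
        (v : Fin n → EuclideanSpace ℝ (Fin n)) (M : Fin n → ℝ),
        Convex ℝ Q → IsCompact Q → (interior Q).Nonempty →
        IsJohnEllipsoid n Q x₀ v M →
        (∀ i j : Fin n, i ≤ j → M j ≤ M i) →
        ∀ k : ℕ, (hk1 : 1 ≤ k) → (hkn : k ≤ n - 1) →
          ∀ V : Submodule ℝ (EuclideanSpace ℝ (Fin n)), Module.finrank ℝ V = k →
            ∃ w ∈ V, ‖w‖ = 1 ∧ ∃ t : ℝ,
              μH[(n : ℝ) - 1] (Q ∩ {x | ⟪x, w⟫ = t}) ≥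
                ENNReal.ofReal (c * ∏ j ∈ Finset.univ.erase (⟨k - 1, by omega⟩ : Fin n), M j) := by
  classical
  refine ⟨((2 * n : ℝ))⁻¹ ^ (n - 1), by positivity, ?_⟩
  intro Q x₀ v M _ _ _ hJohn hMono k hk1 hkn V hVrank
  obtain ⟨hv, hMpos, hEQ, -⟩ := hJohn
  obtain ⟨w, hwV, hw1, hlow, hex⟩ := aux_exists_w n hn k hk1 hkn v hv V hVrank
  -- pick the index m maximizing |⟪v i, w⟫| * M i among nonzero coefficients
  set T : Finset (Fin n) := Finset.univ.filter (fun i => ⟪v i, w⟫ ≠ 0) with hT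
  have hTne : T.Nonempty := by
    obtain ⟨i0, hi0⟩ := hex
    exact ⟨i0, Finset.mem_filter.mpr ⟨Finset.mem_univ _, hi0⟩⟩
  obtain ⟨m, hmT, hmax'⟩ := T.exists_max_image (fun i => |⟪v i, w⟫| * M i) hTne
  have hγm : ⟪v m, w⟫ ≠ 0 := (Finset.mem_filter.mp hmT).2
  have hmk : k - 1 ≤ (m : ℕ) := by
    by_contra h
    exact hγm (hlow m (by omega))
  have hmax : ∀ i, |⟪v i, w⟫| * M i ≤ |⟪v m, w⟫| * M m := by
    intro i
    by_cases hi : ⟪v i, w⟫ = 0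
    · rw [hi, abs_zero, zero_mul]
      exact mul_nonneg (abs_nonneg _) (hMpos m).le
    · exact hmax' i (Finset.mem_filter.mpr ⟨Finset.mem_univ _, hi⟩)
  refine ⟨w, hwV, hw1, ⟪x₀, w⟫, ?_⟩
  have main := aux_section_bound n hn v hv x₀ M hMpos w hw1 m hγm hmax Q hEQ
  refine le_trans ?_ main
  apply ENNReal.ofReal_le_ofReal
  apply mul_le_mul_of_nonneg_left ?_ (by positivity)
  -- the product over `erase ⟨k-1,_⟩` is at most the product over `erase m`
  set kk : Fin n := ⟨k - 1, by omega⟩ with hkk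
  have hA := Finset.prod_erase_mul Finset.univ M (Finset.mem_univ kk)
  have hB := Finset.prod_erase_mul Finset.univ M (Finset.mem_univ m)
  have hMm : M m ≤ M kk := hMono kk m (by simpa [hkk, Fin.le_def] using hmk)
  have hApos : 0 < ∏ i ∈ Finset.univ.erase kk, M i :=
    Finset.prod_pos (fun i _ => hMpos i)
  have hstep : (∏ i ∈ Finset.univ.erase kk, M i) * M m ≤
      (∏ i ∈ Finset.univ.erase m, M i) * M m := by
    calc (∏ i ∈ Finset.univ.erase kk, M i) * M m
        ≤ (∏ i ∈ Finset.univ.erase kk, M i) * M kk :=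
          mul_le_mul_of_nonneg_left hMm hApos.le
      _ = ∏ i, M i := hA
      _ = (∏ i ∈ Finset.univ.erase m, M i) * M m := hB.symm
  exact le_of_mul_le_mul_right hstep (hMpos m)
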